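/- Let Z^{n-1} ⊂ P^{2n} be the scheme defined by u₀ = 0, u_{2i+1}² + 3u_{2i+2}² = 0 for i = 0,…,n-1, u_{2s+1}u_{2t+3} + 3u_{2s+2}u_{2t+4} = 0 and u_{2s+2}u_{2t+3} - u_{2s+1}u_{2t+4} = 0 for 0 ≤ s ≤ t ≤ n-2. Then over any field containing ξ with ξ² = -3, Z^{n-1} is the disjoint union of the two (n-1)-planes Z₊ = {u₀ = 0, u_{2i+1} + ξu_{2i+2} = 0, i = 0,…,n-1} and Z₋ = {u₀ = 0, u_{2i+1} - ξu_{2i+2} = 0, i = 0,…,n-1}; in particular Z^{n-1} is smooth of dimension n-1 and degree 2. -/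

import Mathlib

def oddVar (n : ℕ) (i : Fin n) : Fin (2 * n + 1) := ⟨2 * i.1 + 1, by have := i.2; omega⟩
def evenVar (n : ℕ) (i : Fin n) : Fin (2 * n + 1) := ⟨2 * i.1 + 2, by have := i.2; omega⟩
def sVar1 (n : ℕ) (s : Fin (n - 1)) : Fin (2 * n + 1) := ⟨2 * s.1 + 1, by have := s.2; omega⟩
def sVar2 (n : ℕ) (s : Fin (n - 1)) : Fin (2 * n + 1) := ⟨2 * s.1 + 2, by have := s.2; omega⟩
def tVar3 (n : ℕ) (t : Fin (n - 1)) : Fin (2 * n + 1) := ⟨2 * t.1 + 3, by have := t.2; omega⟩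
def tVar4 (n : ℕ) (t : Fin (n - 1)) : Fin (2 * n + 1) := ⟨2 * t.1 + 4, by have := t.2; omega⟩

/-- The affine cone over the scheme `Z^{n-1} ⊂ P^{2n}` defined by `u₀ = 0`,
`u_{2i+1}² + 3u_{2i+2}² = 0` for `i = 0, …, n-1`, and
`u_{2s+1}u_{2t+3} + 3u_{2s+2}u_{2t+4} = 0`, `u_{2s+2}u_{2t+3} - u_{2s+1}u_{2t+4} = 0`
for `0 ≤ s ≤ t ≤ n-2`. -/
def Zcone (k : Type) [Field k] (n : ℕ) : Set (Fin (2 * n + 1) → k) :=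
  {u | u ⟨0, by omega⟩ = 0 ∧
    (∀ i : Fin n, u (oddVar n i) ^ 2 + 3 * u (evenVar n i) ^ 2 = 0) ∧
    ∀ s t : Fin (n - 1), s.1 ≤ t.1 →
      u (sVar1 n s) * u (tVar3 n t) + 3 * u (sVar2 n s) * u (tVar4 n t) = 0 ∧
      u (sVar2 n s) * u (tVar3 n t) - u (sVar1 n s) * u (tVar4 n t) = 0}

/-- The affine cone over the `(n-1)`-plane `{u₀ = 0, u_{2i+1} + ξ·u_{2i+2} = 0}`. -/
noncomputable def planeCone (k : Type) [Field k] (n : ℕ) (ξ : k) :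
    Submodule k (Fin (2 * n + 1) → k) :=
  LinearMap.ker ((LinearMap.pi (Fin.cons
    (LinearMap.proj (⟨0, by omega⟩ : Fin (2 * n + 1)))
    (fun j : Fin n => LinearMap.proj (oddVar n j) + ξ • LinearMap.proj (evenVar n j)) :
      Fin (n + 1) → (Fin (2 * n + 1) → k) →ₗ[k] k)) :
    (Fin (2 * n + 1) → k) →ₗ[k] (Fin (n + 1) → k))

/-!
Write `aᵢ = u_{2i+1}`, `bᵢ = u_{2i+2}`. Since `x² + 3y² = (x + ξy)(x - ξy)`, each pair `(aᵢ, bᵢ)`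
lies on one of the lines `x + ξy = 0`, `x - ξy = 0`. The first family of mixed equations says
that distinct pairs are orthogonal for the polarization `ac + 3bd` of `x² + 3y²`, and a pair
`(-ξb, b)` is orthogonal to `(ξd, d)` only if `6bd = 0`. Hence all nonzero pairs lie on the same
line, which is the decomposition; the two planes meet only at `0` because `2ξ ≠ 0`.
-/

lemma mem_planeCone {k : Type} [Field k] {n : ℕ} {ξ : k} {u : Fin (2 * n + 1) → k} :
    u ∈ planeCone k n ξ ↔
      u ⟨0, by omega⟩ = 0 ∧ ∀ j : Fin n, u (oddVar n j) + ξ * u (evenVar n j) = 0 := by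
  simp only [planeCone, LinearMap.mem_ker, funext_iff, Fin.forall_fin_succ,
    LinearMap.pi_apply, Fin.cons_zero, Fin.cons_succ, LinearMap.add_apply,
    LinearMap.smul_apply, LinearMap.proj_apply, Pi.zero_apply, smul_eq_mul]

lemma eq_zero_or_eq_oddVar_or_eq_evenVar {n : ℕ} (x : Fin (2 * n + 1)) :
    x = ⟨0, by omega⟩ ∨ (∃ j, x = oddVar n j) ∨ ∃ j, x = evenVar n j := by
  obtain ⟨m, hm⟩ := x
  rcases Nat.even_or_odd' m with ⟨j, rfl | rfl⟩
  · rcases j with _ | j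
    · exact Or.inl rfl
    · exact Or.inr (Or.inr ⟨⟨j, by omega⟩, Fin.ext (by simp only [evenVar]; ring)⟩)
  · exact Or.inr (Or.inl ⟨⟨j, by omega⟩, rfl⟩)

lemma sVar1_eq_oddVar {n : ℕ} (s : Fin (n - 1)) : sVar1 n s = oddVar n ⟨s, by omega⟩ := rfl

lemma sVar2_eq_evenVar {n : ℕ} (s : Fin (n - 1)) : sVar2 n s = evenVar n ⟨s, by omega⟩ := rfl

lemma tVar3_eq_oddVar {n : ℕ} (t : Fin (n - 1)) : tVar3 n t = oddVar n ⟨t + 1, by omega⟩ :=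
  Fin.ext (by simp only [tVar3, oddVar]; ring)

lemma tVar4_eq_evenVar {n : ℕ} (t : Fin (n - 1)) : tVar4 n t = evenVar n ⟨t + 1, by omega⟩ :=
  Fin.ext (by simp only [tVar4, evenVar]; ring)

lemma pair_orthogonal_of_mem_Zcone {k : Type} [Field k] {n : ℕ} {u : Fin (2 * n + 1) → k}
    (hu : u ∈ Zcone k n) (i j : Fin n) :
    u (oddVar n i) * u (oddVar n j) + 3 * u (evenVar n i) * u (evenVar n j) = 0 := by
  obtain ⟨-, hsq, hmixed⟩ := hu
  have of_lt : ∀ i j : Fin n, i < j →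
      u (oddVar n i) * u (oddVar n j) + 3 * u (evenVar n i) * u (evenVar n j) = 0 := by
    intro i j hij
    have h := (hmixed ⟨i, by omega⟩ ⟨j - 1, by omega⟩ (by simp only; omega)).1
    rwa [sVar1_eq_oddVar, sVar2_eq_evenVar, tVar3_eq_oddVar, tVar4_eq_evenVar,
      show (⟨j - 1 + 1, _⟩ : Fin n) = j from Fin.ext (by simp only; omega)] at h
  rcases lt_trichotomy i j with hij | rfl | hji
  · exact of_lt i j hij
  · linear_combination hsq i
  · linear_combination of_lt j i hji

lemma sub_mul_eq_zero_of_add_mul_ne_zero {k : Type} [Field k] {ξ a b c d : k}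
    (hξ : ξ ^ 2 = -3) (h6 : (6 : k) ≠ 0) (hab : a ^ 2 + 3 * b ^ 2 = 0)
    (hcd : c ^ 2 + 3 * d ^ 2 = 0) (horth : a * c + 3 * b * d = 0) (hne : a + ξ * b ≠ 0) :
    c - ξ * d = 0 := by
  have ha : a - ξ * b = 0 :=
    (mul_eq_zero.mp (by linear_combination hab - b ^ 2 * hξ : (a + ξ * b) * (a - ξ * b) = 0)
      ).resolve_left hne
  have hb : b ≠ 0 := fun hb => hne (by linear_combination ha + 2 * ξ * hb)
  rcases mul_eq_zero.mp (by linear_combination hcd - d ^ 2 * hξ : (c + ξ * d) * (c - ξ * d) = 0)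
    with hc | hc
  · have hd : d = 0 := by
      have h6bd : 6 * b * d = 0 := by
        linear_combination horth - ξ * b * hc - c * ha + b * d * hξ
      simpa [h6, hb] using h6bd
    linear_combination hc - 2 * ξ * hd
  · exact hc

lemma planeCone_subset_Zcone {k : Type} [Field k] {n : ℕ} {ξ : k} (hξ : ξ ^ 2 = -3) :
    (planeCone k n ξ : Set (Fin (2 * n + 1) → k)) ⊆ Zcone k n := by
  intro u hu
  obtain ⟨h0, hline⟩ := mem_planeCone.mp hu
  refine ⟨h0, fun i => ?_, fun s t _ => ?_⟩
  · linear_combination (u (oddVar n i) - ξ * u (evenVar n i)) * hline i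
      + u (evenVar n i) ^ 2 * hξ
  · have hs := hline ⟨s, by omega⟩
    have ht := hline ⟨t + 1, by omega⟩
    rw [sVar1_eq_oddVar, sVar2_eq_evenVar, tVar3_eq_oddVar, tVar4_eq_evenVar]
    constructor
    · linear_combination u (oddVar n ⟨t + 1, by omega⟩) * hs
        - ξ * u (evenVar n ⟨s, by omega⟩) * ht
        + u (evenVar n ⟨s, by omega⟩) * u (evenVar n ⟨t + 1, by omega⟩) * hξ
    · linear_combination u (evenVar n ⟨s, by omega⟩) * ht
        - u (evenVar n ⟨t + 1, by omega⟩) * hs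

lemma Zcone_subset_planeCone_union {k : Type} [Field k] {n : ℕ} {ξ : k} (hξ : ξ ^ 2 = -3)
    (h6 : (6 : k) ≠ 0) :
    Zcone k n ⊆ (planeCone k n ξ : Set (Fin (2 * n + 1) → k)) ∪ planeCone k n (-ξ) := by
  intro u hu
  simp only [Set.mem_union, SetLike.mem_coe, mem_planeCone, hu.1, true_and]
  refine or_iff_not_imp_left.mpr fun hnot j => ?_
  obtain ⟨j₀, hj₀⟩ := not_forall.mp hnot
  have hsq := hu.2.1
  linear_combination sub_mul_eq_zero_of_add_mul_ne_zero hξ h6 (hsq j₀) (hsq j)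
    (pair_orthogonal_of_mem_Zcone hu j₀ j) hj₀

lemma planeCone_inf_planeCone_neg_eq_bot {k : Type} [Field k] {n : ℕ} {ξ : k} (h2 : (2 : k) ≠ 0)
    (hξ : ξ ≠ 0) : planeCone k n ξ ⊓ planeCone k n (-ξ) = ⊥ := by
  refine eq_bot_iff.mpr fun u hu => ?_
  obtain ⟨⟨h0, hplus⟩, ⟨-, hminus⟩⟩ := And.imp mem_planeCone.mp mem_planeCone.mp hu
  have heven : ∀ j, u (evenVar n j) = 0 := fun j => by
    have h : 2 * ξ * u (evenVar n j) = 0 := by linear_combination hplus j - hminus j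
    simpa [h2, hξ] using h
  have hodd : ∀ j, u (oddVar n j) = 0 := fun j => by
    linear_combination hplus j - ξ * heven j
  refine (Submodule.mem_bot k).mpr (funext fun x => ?_)
  rcases eq_zero_or_eq_oddVar_or_eq_evenVar x with rfl | ⟨j, rfl⟩ | ⟨j, rfl⟩
  exacts [h0, hodd j, heven j]

lemma finrank_ker_add_finrank_of_surjective {K V W : Type*} [DivisionRing K] [AddCommGroup V]
    [Module K V] [AddCommGroup W] [Module K W] [FiniteDimensional K V] {f : V →ₗ[K] W}
    (hf : Function.Surjective f) :
    Module.finrank K (LinearMap.ker f) + Module.finrank K W = Module.finrank K V := by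
  rw [← LinearMap.finrank_range_add_finrank_ker f, LinearMap.range_eq_top.mpr hf, finrank_top,
    add_comm]

lemma finrank_planeCone {k : Type} [Field k] {n : ℕ} (ξ : k) :
    Module.finrank k (planeCone k n ξ) = n := by
  refine Nat.add_right_cancel ((finrank_ker_add_finrank_of_surjective fun v => ?_).trans ?_)
  · -- a preimage of `v` puts `v₀` at `u₀`, `v_{j+1}` at `u_{2j+1}` and `0` at `u_{2j+2}`
    refine ⟨fun x => if x.1 % 2 = 1 ∨ x.1 = 0 then v ⟨(x.1 + 1) / 2, by omega⟩ else 0,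
      funext (Fin.cases (by simp) fun j => ?_)⟩
    simp only [LinearMap.pi_apply, Fin.cons_succ, LinearMap.add_apply, LinearMap.smul_apply,
      LinearMap.proj_apply, smul_eq_mul, oddVar, evenVar]
    rw [if_pos (by omega), if_neg (by omega), mul_zero, add_zero]
    exact congrArg v (Fin.ext (by simp only [Fin.val_succ]; omega))
  · rw [Module.finrank_fin_fun, Module.finrank_fin_fun]
    ring

theorem Z_decomposition_general (k : Type) [Field k] (h2 : (2 : k) ≠ 0) (h3 : (3 : k) ≠ 0)
    (ξ : k) (hξ : ξ ^ 2 = -3) (n : ℕ) :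
    Zcone k n = (planeCone k n ξ : Set (Fin (2 * n + 1) → k)) ∪ planeCone k n (-ξ) ∧
    planeCone k n ξ ⊓ planeCone k n (-ξ) = ⊥ ∧
    Module.finrank k (planeCone k n ξ) = n ∧
    Module.finrank k (planeCone k n (-ξ)) = n := by
  have hξ_neg : (-ξ) ^ 2 = -3 := by rw [neg_sq, hξ]
  have hξ0 : ξ ≠ 0 := fun h => h3 (by linear_combination hξ - ξ * h)
  have h6 : (6 : k) ≠ 0 := fun h => mul_ne_zero h2 h3 (by linear_combination h)
  refine ⟨?_, planeCone_inf_planeCone_neg_eq_bot h2 hξ0, finrank_planeCone ξ, finrank_planeCone (-ξ)⟩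
  exact (Zcone_subset_planeCone_union hξ h6).antisymm
    (Set.union_subset (planeCone_subset_Zcone hξ) (planeCone_subset_Zcone hξ_neg))

/-- Over any field `k` (of characteristic `≠ 2, 3`) containing `ξ` with
`ξ² = -3`, the scheme `Z^{n-1} ⊂ P^{2n}` is the disjoint union of the two `(n-1)`-planes
`Z₊ = {u₀ = 0, u_{2i+1} + ξu_{2i+2} = 0}` and `Z₋ = {u₀ = 0, u_{2i+1} - ξu_{2i+2} = 0}`;
in particular `Z^{n-1}` is smooth of dimension `n-1` and degree `2`. In terms of affine
cones: the cone of `Z^{n-1}` is the union of the two `n`-dimensional linear subspaces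
`Z₊, Z₋` of `k^{2n+1}`, which meet only at the origin. -/
theorem Z_decomposition (k : Type) [Field k] (h2 : (2 : k) ≠ 0) (h3 : (3 : k) ≠ 0)
    (ξ : k) (hξ : ξ ^ 2 = -3) (n : ℕ) (hn : 1 ≤ n) :
    Zcone k n = (planeCone k n ξ : Set (Fin (2 * n + 1) → k)) ∪ planeCone k n (-ξ) ∧
    planeCone k n ξ ⊓ planeCone k n (-ξ) = ⊥ ∧
    Module.finrank k (planeCone k n ξ) = n ∧
    Module.finrank k (planeCone k n (-ξ)) = n :=
  Z_decomposition_general k h2 h3 ξ hξ n
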